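/- arXiv:2512.00507 — 3 statements merged into one kernel-verified Lean document; each statement's English description precedes it below -/
import Mathlib

section
/- With the notation above, for each 1 ≤ i ≤ N−1, the values P_N^k(−r_i) and P_N^k(−r_{i+1}) have opposite (nonzero) signs, and hence by the intermediate value theorem P_N^k has a real root in the open interval (−r_{i+1}, −r_i). -/
open Polynomial Finset

/-- The characteristic polynomial `P_N^k` associated with the extended Burgers model. -/
noncomputable def PNk (N : ℕ) (D : ℝ) (b r : Fin N → ℝ) (k : ℕ) : Polynomial ℝ :=
  (C D + C (1 / (2 * (k : ℝ) - 1) ^ 2) * X ^ 2) * ∏ j, (X + C (r j))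
    - ∑ i, C (b i) * ∏ j ∈ univ.erase i, (X + C (r j))

/-!
At `x = -r m` every product `∏ j, (x + r j)` that contains the factor `j = m` vanishes, so
`P(-r m) = -b m * ∏_{t ≠ m} (r t - r m)`. As `r` is increasing, exactly `m` of these factors are
negative, so `P(-r m)` has the sign of `-(-1)^m`, which alternates between `m = i` and `m = i + 1`;
the intermediate value theorem then gives a root in between.
-/

theorem exists_mem_Ioo_eq_zero_of_mul_neg {α δ : Type*} [ConditionallyCompleteLinearOrder α]
    [TopologicalSpace α] [OrderTopology α] [DenselyOrdered α]
    [Ring δ] [LinearOrder δ] [IsStrictOrderedRing δ] [TopologicalSpace δ] [OrderClosedTopology δ]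
    {f : α → δ} {a b : α} (hab : a ≤ b) (hf : ContinuousOn f (Set.Icc a b)) (h : f a * f b < 0) :
    ∃ c ∈ Set.Ioo a b, f c = 0 := by
  rcases mul_neg_iff.mp h with ⟨ha, hb⟩ | ⟨ha, hb⟩
  · exact intermediate_value_Ioo' hab hf ⟨hb, ha⟩
  · exact intermediate_value_Ioo hab hf ⟨ha, hb⟩

theorem neg_one_pow_mul_prod_erase_sub_pos {R : Type*} [CommRing R] [LinearOrder R]
    [IsStrictOrderedRing R] {N : ℕ} {r : Fin N → R} (hr : StrictMono r) (m : Fin N) :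
    0 < (-1) ^ (m : ℕ) * ∏ t ∈ univ.erase m, (r t - r m) := by
  have hsplit : univ.erase m = Iio m ∪ Ioi m := by
    ext t
    simp [lt_or_lt_iff_ne]
  rw [hsplit, prod_union (disjoint_Ioi_Iio m).symm, ← mul_assoc, ← Fin.card_Iio m, ← prod_neg]
  refine mul_pos (prod_pos fun t ht => ?_) (prod_pos fun t ht => ?_)
  · linarith [hr (mem_Iio.mp ht)]
  · linarith [hr (mem_Ioi.mp ht)]

theorem eval_neg_PNk (N : ℕ) (D : ℝ) (b r : Fin N → ℝ) (k : ℕ) (m : Fin N) :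
    (PNk N D b r k).eval (-r m) = -(b m * ∏ t ∈ univ.erase m, (r t - r m)) := by
  have hvanish : ∀ t ≠ m, ∏ j ∈ univ.erase t, (-r m + r j) = 0 := fun t ht =>
    prod_eq_zero (mem_erase.mpr ⟨ht.symm, mem_univ m⟩) (neg_add_cancel _)
  simp only [PNk, eval_sub, eval_mul, eval_add, eval_C, eval_pow, eval_X, eval_prod,
    eval_finsetSum]
  rw [prod_eq_zero (mem_univ m) (neg_add_cancel _), mul_zero, zero_sub,
    sum_eq_single_of_mem m (mem_univ m) fun t _ ht => by rw [hvanish t ht, mul_zero]]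
  simp only [neg_add_eq_sub]

theorem stmt2_general (N : ℕ) (D : ℝ) (b r : Fin N → ℝ) (k : ℕ)
    (hr : StrictMono r) (hb : ∀ i, 0 < b i)
    (i j : Fin N) (hij : (i : ℕ) + 1 = (j : ℕ)) :
    (PNk N D b r k).eval (-(r i)) * (PNk N D b r k).eval (-(r j)) < 0 ∧
      ∃ a ∈ Set.Ioo (-(r j)) (-(r i)), (PNk N D b r k).eval a = 0 := by
  have hmul : (PNk N D b r k).eval (-(r i)) * (PNk N D b r k).eval (-(r j)) < 0 := by
    have hi := neg_one_pow_mul_prod_erase_sub_pos hr i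
    have hj := neg_one_pow_mul_prod_erase_sub_pos hr j
    rw [← hij, pow_succ] at hj
    have hsq : ((-1 : ℝ) ^ (i : ℕ)) * (-1) ^ (i : ℕ) = 1 := by rw [← mul_pow]; norm_num
    have hprod : (∏ t ∈ univ.erase i, (r t - r i)) * ∏ t ∈ univ.erase j, (r t - r j) < 0 := by
      nlinarith [mul_pos hi hj]
    rw [eval_neg_PNk, eval_neg_PNk, neg_mul_neg, mul_mul_mul_comm]
    exact mul_neg_of_pos_of_neg (mul_pos (hb i) (hb j)) hprod
  have hji : -r j ≤ -r i := neg_le_neg (hr.monotone (Fin.le_iff_val_le_val.mpr (by omega)))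
  exact ⟨hmul, exists_mem_Ioo_eq_zero_of_mul_neg hji (PNk N D b r k).continuousOn
    (by rwa [mul_comm])⟩

theorem stmt2 (N : ℕ) (D : ℝ) (b r : Fin N → ℝ) (k : ℕ) (hk : 1 ≤ k)
    (hr : StrictMono r) (hrpos : ∀ i, 0 < r i) (hb : ∀ i, 0 < b i)
    (i j : Fin N) (hij : (i : ℕ) + 1 = (j : ℕ)) :
    (PNk N D b r k).eval (-(r i)) * (PNk N D b r k).eval (-(r j)) < 0 ∧
      ∃ a ∈ Set.Ioo (-(r j)) (-(r i)), (PNk N D b r k).eval a = 0 :=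
  stmt2_general N D b r k hr hb i j hij
end

section
/- Uniqueness theorem: Suppose (D, b_1,...,b_N, r_1,...,r_N) and (D', b'_1,...,b'_N, r'_1,...,r'_N) are two sets of parameters with 0 < r_1 < ... < r_N, 0 < r'_1 < ... < r'_N, all b_i, b'_i > 0, such that for two distinct values k_1 < k_2 (both ≥ 1) the corresponding characteristic polynomials agree: P_N^{k_1}[D,b,r] = P_N^{k_1}[D',b',r'] and P_N^{k_2}[D,b,r] = P_N^{k_2}[D',b',r'] as polynomials. Then D = D', r_i = r'_i and b_i = b'_i for all i. -/
/-!
With `Q_r = ∏ⱼ (X + rⱼ)`, `S_{b,r} = ∑ᵢ bᵢ ∏_{j ≠ i} (X + rⱼ)` and `cₖ = 1 / (2k - 1)²` we have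
`P^k = (D + cₖ X²) Q_r - S_{b,r}`. Subtracting the identities for `k₁` and `k₂` leaves
`(c_{k₁} - c_{k₂}) X² (Q_r - Q_{r'}) = 0` with `c_{k₁} ≠ c_{k₂}`, so `Q_r = Q_{r'}`; the roots of
`Q_r` are the `-rⱼ`, so the increasing sequences `r` and `r'` have the same range and coincide.
Then `S_{b,r} - S_{b',r} = (D - D') Q_r`, and evaluating at the root `-rₘ` leaves
`(bₘ - b'ₘ) ∏_{j ≠ m} (rⱼ - rₘ) = 0`, so `b = b'`; finally `D = D'` because `Q_r ≠ 0`.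
-/

open Polynomial Finset

section

variable {R ι : Type*} [CommRing R] [Fintype ι]

lemma eval_neg_sum_C_mul_prod_erase [DecidableEq ι] (r b : ι → R) (m : ι) :
    (∑ i, C (b i) * ∏ j ∈ univ.erase i, (X + C (r j))).eval (-r m)
      = b m * ∏ j ∈ univ.erase m, (r j - r m) := by
  rw [eval_finsetSum, sum_eq_single m]
  · simp [eval_prod, neg_add_eq_sub]
  · intro i _ hi
    simp only [eval_mul, eval_C, eval_prod, eval_add, eval_X]
    exact mul_eq_zero_of_right _
      (prod_eq_zero (mem_erase.mpr ⟨Ne.symm hi, mem_univ m⟩) (by simp))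
  · simp

variable [IsDomain R]

lemma eval_neg_prod_X_add_C_eq_zero_iff (r : ι → R) (a : R) :
    (∏ j, (X + C (r j))).eval (-a) = 0 ↔ a ∈ Set.range r := by
  simp only [eval_prod, eval_add, eval_X, eval_C, prod_eq_zero_iff, mem_univ, true_and,
    neg_add_eq_zero, Set.mem_range]
  exact exists_congr fun _ => eq_comm

lemma range_eq_of_prod_X_add_C_eq {r r' : ι → R}
    (h : ∏ j, (X + C (r j)) = ∏ j, (X + C (r' j))) : Set.range r = Set.range r' := by
  ext a
  rw [← eval_neg_prod_X_add_C_eq_zero_iff, h, eval_neg_prod_X_add_C_eq_zero_iff]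

lemma eq_of_prod_X_add_C_dvd_sub [DecidableEq ι] {r : ι → R} (hr : Function.Injective r)
    {b b' : ι → R}
    (h : ∏ j, (X + C (r j)) ∣
      ∑ i, C (b i) * ∏ j ∈ univ.erase i, (X + C (r j))
        - ∑ i, C (b' i) * ∏ j ∈ univ.erase i, (X + C (r j))) :
    b = b' := by
  funext m
  obtain ⟨p, hp⟩ := h
  have hroot : (∏ j, (X + C (r j))).eval (-r m) = 0 :=
    (eval_neg_prod_X_add_C_eq_zero_iff r _).mpr ⟨m, rfl⟩
  have hne : ∏ j ∈ univ.erase m, (r j - r m) ≠ 0 :=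
    prod_ne_zero_iff.mpr fun j hj => sub_ne_zero.mpr (hr.ne (mem_erase.mp hj).1)
  have heval := congrArg (eval (-r m)) hp
  rw [eval_sub, eval_neg_sum_C_mul_prod_erase, eval_neg_sum_C_mul_prod_erase, eval_mul,
    hroot, zero_mul, ← sub_mul, mul_eq_zero_iff_right hne] at heval
  exact sub_eq_zero.mp heval

end

lemma one_div_sq_two_mul_sub_one_ne {k₁ k₂ : ℕ} (hk₁ : 1 ≤ k₁) (hk : k₁ < k₂) :
    1 / (2 * (k₁ : ℝ) - 1) ^ 2 ≠ 1 / (2 * (k₂ : ℝ) - 1) ^ 2 := by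
  have h₁ : (1 : ℝ) ≤ k₁ := by exact_mod_cast hk₁
  have h₂ : (k₁ : ℝ) < k₂ := by exact_mod_cast hk
  have hpos : (0 : ℝ) < 2 * k₁ - 1 := by linarith
  refine (one_div_lt_one_div_of_lt (by positivity) ?_).ne'
  nlinarith

lemma prod_X_add_C_eq_of_PNk_eq {N : ℕ} {D D' : ℝ} {b r b' r' : Fin N → ℝ} {k₁ k₂ : ℕ}
    (hc : 1 / (2 * (k₁ : ℝ) - 1) ^ 2 ≠ 1 / (2 * (k₂ : ℝ) - 1) ^ 2)
    (h₁ : PNk N D b r k₁ = PNk N D' b' r' k₁) (h₂ : PNk N D b r k₂ = PNk N D' b' r' k₂) :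
    ∏ j, (X + C (r j)) = ∏ j, (X + C (r' j)) := by
  have key : C (1 / (2 * (k₁ : ℝ) - 1) ^ 2 - 1 / (2 * (k₂ : ℝ) - 1) ^ 2) * X ^ 2
      * (∏ j, (X + C (r j)) - ∏ j, (X + C (r' j))) = 0 := by
    unfold PNk at h₁ h₂
    rw [map_sub]
    linear_combination h₁ - h₂
  rw [mul_eq_zero_iff_left, sub_eq_zero] at key
  · exact key
  · exact mul_ne_zero (by simpa [sub_eq_zero] using hc) (pow_ne_zero _ X_ne_zero)

lemma eq_of_PNk_eq {N : ℕ} {D D' : ℝ} {b b' r : Fin N → ℝ} {k : ℕ} (hr : Function.Injective r)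
    (h : PNk N D b r k = PNk N D' b' r k) : D = D' ∧ b = b' := by
  have hS : ∑ i, C (b i) * ∏ j ∈ univ.erase i, (X + C (r j))
      - ∑ i, C (b' i) * ∏ j ∈ univ.erase i, (X + C (r j))
      = (∏ j, (X + C (r j))) * C (D - D') := by
    unfold PNk at h
    rw [map_sub]
    linear_combination -h
  obtain rfl := eq_of_prod_X_add_C_dvd_sub hr (Dvd.intro _ hS.symm)
  have hQ : ∏ j, (X + C (r j)) ≠ 0 :=
    (monic_prod_of_monic _ _ fun j _ => monic_X_add_C (r j)).ne_zero
  rw [sub_self, eq_comm, mul_eq_zero_iff_left hQ, C_eq_zero, sub_eq_zero] at hS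
  exact ⟨hS, rfl⟩

theorem stmt8_general (N : ℕ) (D D' : ℝ) (b r b' r' : Fin N → ℝ) (k₁ k₂ : ℕ)
    (hk₁ : 1 ≤ k₁) (hk : k₁ < k₂)
    (hr : StrictMono r)
    (hr' : StrictMono r')
    (h1 : PNk N D b r k₁ = PNk N D' b' r' k₁)
    (h2 : PNk N D b r k₂ = PNk N D' b' r' k₂) :
    D = D' ∧ r = r' ∧ b = b' := by
  have hQ := prod_X_add_C_eq_of_PNk_eq (one_div_sq_two_mul_sub_one_ne hk₁ hk) h1 h2
  obtain rfl : r = r' := (hr.range_inj hr').mp (range_eq_of_prod_X_add_C_eq hQ)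
  obtain ⟨hD, hb⟩ := eq_of_PNk_eq hr.injective h1
  exact ⟨hD, rfl, hb⟩

theorem stmt8 (N : ℕ) (D D' : ℝ) (b r b' r' : Fin N → ℝ) (k₁ k₂ : ℕ)
    (hk₁ : 1 ≤ k₁) (hk : k₁ < k₂)
    (hr : StrictMono r) (hrpos : ∀ i, 0 < r i) (hb : ∀ i, 0 < b i)
    (hr' : StrictMono r') (hrpos' : ∀ i, 0 < r' i) (hb' : ∀ i, 0 < b' i)
    (h1 : PNk N D b r k₁ = PNk N D' b' r' k₁)
    (h2 : PNk N D b r k₂ = PNk N D' b' r' k₂) :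
    D = D' ∧ r = r' ∧ b = b' :=
  stmt8_general N D D' b r b' r' k₁ k₂ hk₁ hk hr hr' h1 h2
end

section
/- Knowing all roots determines the polynomial: if two monic real polynomials of degree N+2 have the same multiset of N+2 complex roots (counted with multiplicity), they are equal; consequently, if the multisets of complex roots of (2k−1)²·P_N^k for the two parameter sets coincide for k = k_1 and k = k_2 with k_1 ≠ k_2, then the two parameter sets (D, b, r) coincide. -/
/- Over `ℂ` a monic polynomial is the product of `X - z` over its roots, so the roots determine it.
With `A = nodePoly r = ∏ j, (X + C (r j))` and `S = weightPoly b r = ∑ i, b i ∏_{j ≠ i} (X + r j)`,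
the rescaled polynomial is `c P = X² A + c (D A - S)` where `c = (2k - 1)²`; knowing it for two
different values of `c` separates `X² A` from `D A - S`. The roots of `A` are the `-r j`, which fix
the increasing `r`; the coefficient of `D A - S` in degree `N` is `D`; and evaluating `S` at `-r i`
leaves `b i` times a nonzero product. -/

open Polynomial Finset

theorem Polynomial.eq_of_monic_of_roots_map_eq {K L : Type*} [Field K] [Field L] [IsAlgClosed L]
    (f : K →+* L) {p q : K[X]} (hp : p.Monic) (hq : q.Monic)
    (h : (p.map f).roots = (q.map f).roots) : p = q := by
  apply map_injective f f.injective
  rw [(IsAlgClosed.splits _).eq_prod_roots_of_monic (hp.map f),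
    (IsAlgClosed.splits _).eq_prod_roots_of_monic (hq.map f), h]

theorem eq_and_eq_of_add_mul_eq_add_mul {R : Type*} [CommRing R] [NoZeroDivisors R]
    {a a' u u' c₁ c₂ : R} (hc : c₁ ≠ c₂) (h₁ : a + c₁ * u = a' + c₁ * u')
    (h₂ : a + c₂ * u = a' + c₂ * u') : a = a' ∧ u = u' := by
  have hu : u = u' := by
    have h : (c₁ - c₂) * (u - u') = 0 := by linear_combination h₁ - h₂
    exact sub_eq_zero.1 ((mul_eq_zero.1 h).resolve_left (sub_ne_zero.2 hc))
  subst hu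
  exact ⟨add_right_cancel h₁, rfl⟩

section NodePoly

variable {ι R : Type*} [Fintype ι] [CommRing R]

noncomputable def nodePoly (r : ι → R) : R[X] := ∏ j, (X + C (r j))

noncomputable def weightPoly [DecidableEq ι] (b r : ι → R) : R[X] :=
  ∑ i, C (b i) * ∏ j ∈ univ.erase i, (X + C (r j))

theorem monic_nodePoly (r : ι → R) : (nodePoly r).Monic :=
  monic_prod_of_monic _ _ fun j _ => monic_X_add_C (r j)

theorem natDegree_nodePoly [Nontrivial R] (r : ι → R) :
    (nodePoly r).natDegree = Fintype.card ι := by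
  simp [nodePoly, natDegree_prod_of_monic _ _ fun j _ => monic_X_add_C (r j)]

theorem eval_nodePoly_eq_zero_iff [IsDomain R] (r : ι → R) (x : R) :
    (nodePoly r).eval x = 0 ↔ ∃ j, x + r j = 0 := by
  simp [nodePoly, eval_prod, prod_eq_zero_iff]

theorem nodePoly_injective_of_strictMono [LinearOrder ι] [WellFoundedLT ι] [IsDomain R]
    [Preorder R] {r r' : ι → R} (hr : StrictMono r) (hr' : StrictMono r')
    (h : nodePoly r = nodePoly r') : r = r' := by
  refine (hr.range_inj hr').1 (Set.ext fun y => ?_)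
  have hy : (nodePoly r).eval (-y) = 0 ↔ (nodePoly r').eval (-y) = 0 := by rw [h]
  simp only [eval_nodePoly_eq_zero_iff, neg_add_eq_zero] at hy
  simpa only [Set.mem_range, eq_comm] using hy

variable [DecidableEq ι]

theorem degree_weightPoly_lt [Nontrivial R] (b r : ι → R) :
    (weightPoly b r).degree < Fintype.card ι := by
  refine (degree_sum_le _ _).trans_lt ((Finset.sup_lt_iff (WithBot.bot_lt_coe _)).2 fun i _ => ?_)
  have hcard : 0 < Fintype.card ι := Fintype.card_pos_iff.2 ⟨i⟩
  have hdeg : (∏ j ∈ univ.erase i, (X + C (r j))).natDegree = Fintype.card ι - 1 := by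
    simp [natDegree_prod_of_monic _ _ fun j _ => monic_X_add_C (r j), card_erase_of_mem]
  calc _ ≤ ((C (b i) * ∏ j ∈ univ.erase i, (X + C (r j))).natDegree : WithBot ℕ) :=
        degree_le_natDegree
    _ < Fintype.card ι := by
        exact_mod_cast (natDegree_C_mul_le _ _).trans_lt (by omega)

theorem degree_C_mul_nodePoly_sub_weightPoly_le [Nontrivial R] (D : R) (b r : ι → R) :
    (C D * nodePoly r - weightPoly b r).degree ≤ Fintype.card ι := by
  refine (degree_sub_le _ _).trans (max_le ?_ (degree_weightPoly_lt b r).le)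
  calc _ ≤ 0 + (nodePoly r).degree := (degree_mul_le _ _).trans (add_le_add_left degree_C_le _)
    _ = Fintype.card ι := by
        rw [zero_add, degree_eq_natDegree (monic_nodePoly r).ne_zero, natDegree_nodePoly]

theorem monic_X_sq_mul_nodePoly_add [Nontrivial R] (c D : R) (b r : ι → R) :
    (X ^ 2 * nodePoly r + C c * (C D * nodePoly r - weightPoly b r)).Monic := by
  have hmonic := (monic_X_pow 2).mul (monic_nodePoly r)
  refine hmonic.add_of_left ?_
  rw [degree_eq_natDegree hmonic.ne_zero, (monic_X_pow 2).natDegree_mul (monic_nodePoly r),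
    natDegree_X_pow, natDegree_nodePoly]
  calc _ ≤ 0 + (C D * nodePoly r - weightPoly b r).degree :=
        (degree_mul_le _ _).trans (add_le_add_left degree_C_le _)
    _ ≤ Fintype.card ι := by
        rw [zero_add]; exact degree_C_mul_nodePoly_sub_weightPoly_le D b r
    _ < (2 + Fintype.card ι : ℕ) := by exact_mod_cast Nat.lt_add_of_pos_left two_pos

theorem eval_neg_weightPoly (b r : ι → R) (i : ι) :
    (weightPoly b r).eval (-r i) = b i * ∏ j ∈ univ.erase i, (-r i + r j) := by
  rw [weightPoly, eval_finsetSum, Finset.sum_eq_single i]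
  · simp [eval_prod]
  · intro t _ hti
    have hi : i ∈ univ.erase t := mem_erase.2 ⟨Ne.symm hti, mem_univ i⟩
    simp [eval_prod, prod_eq_zero hi]
  · simp

theorem weightPoly_left_injective [IsDomain R] {r : ι → R} (hr : Function.Injective r) :
    Function.Injective fun b => weightPoly b r := by
  intro b b' h
  funext i
  have hi := congrArg (eval (-r i)) h
  simp only [eval_neg_weightPoly] at hi
  refine mul_right_cancel₀ (prod_ne_zero_iff.2 fun j hj => ?_) hi
  exact neg_add_eq_zero.not.2 fun hij => (mem_erase.1 hj).1 (hr hij.symm)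

theorem coeff_C_mul_nodePoly_sub_weightPoly [Nontrivial R] (D : R) (b r : ι → R) :
    (C D * nodePoly r - weightPoly b r).coeff (Fintype.card ι) = D := by
  rw [coeff_sub, coeff_C_mul, ← natDegree_nodePoly r, (monic_nodePoly r).coeff_natDegree,
    natDegree_nodePoly, coeff_eq_zero_of_degree_lt (degree_weightPoly_lt b r), mul_one, sub_zero]

theorem eq_of_C_mul_nodePoly_sub_weightPoly_eq [IsDomain R] {D D' : R} {b b' r : ι → R}
    (hr : Function.Injective r)
    (h : C D * nodePoly r - weightPoly b r = C D' * nodePoly r - weightPoly b' r) :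
    D = D' ∧ b = b' := by
  have hD : D = D' := by
    simpa only [coeff_C_mul_nodePoly_sub_weightPoly] using congrArg (coeff · (Fintype.card ι)) h
  subst hD
  exact ⟨rfl, weightPoly_left_injective hr (sub_right_injective h)⟩

end NodePoly

theorem C_mul_PNk {N : ℕ} (D : ℝ) (b r : Fin N → ℝ) {k : ℕ} (hk : 1 ≤ k) :
    C ((2 * (k : ℝ) - 1) ^ 2) * PNk N D b r k =
      X ^ 2 * nodePoly r + C ((2 * (k : ℝ) - 1) ^ 2) * (C D * nodePoly r - weightPoly b r) := by
  have hk' : (1 : ℝ) ≤ k := by exact_mod_cast hk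
  have hc : C ((2 * (k : ℝ) - 1) ^ 2) * C (1 / (2 * (k : ℝ) - 1) ^ 2) = 1 := by
    rw [← C_mul, mul_one_div_cancel (pow_ne_zero 2 (by linarith)), C_1]
  rw [PNk, ← nodePoly, ← weightPoly]
  linear_combination (X ^ 2 * nodePoly r) * hc

theorem stmt9 (N : ℕ) :
    (∀ p q : Polynomial ℝ, p.Monic → q.Monic →
        p.degree = (N + 2 : ℕ) → q.degree = (N + 2 : ℕ) →
        (p.map (algebraMap ℝ ℂ)).roots = (q.map (algebraMap ℝ ℂ)).roots → p = q) ∧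
    (∀ (D D' : ℝ) (b r b' r' : Fin N → ℝ) (k₁ k₂ : ℕ), 1 ≤ k₁ → k₁ < k₂ →
        StrictMono r → (∀ i, 0 < r i) → (∀ i, 0 < b i) →
        StrictMono r' → (∀ i, 0 < r' i) → (∀ i, 0 < b' i) →
        (∀ k ∈ ({k₁, k₂} : Set ℕ),
          ((C ((2 * (k : ℝ) - 1) ^ 2) * PNk N D b r k).map (algebraMap ℝ ℂ)).roots =
            ((C ((2 * (k : ℝ) - 1) ^ 2) * PNk N D' b' r' k).map (algebraMap ℝ ℂ)).roots) →
        D = D' ∧ r = r' ∧ b = b') := by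
  refine ⟨fun p q hp hq _ _ h => eq_of_monic_of_roots_map_eq _ hp hq h, ?_⟩
  intro D D' b r b' r' k₁ k₂ hk₁ hk₁₂ hr _ _ hr' _ _ hroots
  have hscaled : ∀ k, 1 ≤ k → k ∈ ({k₁, k₂} : Set ℕ) →
      X ^ 2 * nodePoly r + C ((2 * (k : ℝ) - 1) ^ 2) * (C D * nodePoly r - weightPoly b r) =
        X ^ 2 * nodePoly r' +
          C ((2 * (k : ℝ) - 1) ^ 2) * (C D' * nodePoly r' - weightPoly b' r') := by
    intro k hk hmem
    rw [← C_mul_PNk D b r hk, ← C_mul_PNk D' b' r' hk]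
    refine eq_of_monic_of_roots_map_eq _ ?_ ?_ (hroots k hmem) <;>
      rw [C_mul_PNk _ _ _ hk] <;> exact monic_X_sq_mul_nodePoly_add _ _ _ _
  have hk₁' : (1 : ℝ) ≤ k₁ := by exact_mod_cast hk₁
  have hk₁₂' : (k₁ : ℝ) < k₂ := by exact_mod_cast hk₁₂
  have hc : C ((2 * (k₁ : ℝ) - 1) ^ 2) ≠ C ((2 * (k₂ : ℝ) - 1) ^ 2) :=
    C_injective.ne (by nlinarith)
  obtain ⟨hX, hU⟩ := eq_and_eq_of_add_mul_eq_add_mul hc (hscaled k₁ hk₁ (by simp))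
    (hscaled k₂ (hk₁.trans hk₁₂.le) (by simp))
  obtain rfl := nodePoly_injective_of_strictMono hr hr' (mul_left_cancel₀ (by simp) hX)
  obtain ⟨rfl, rfl⟩ := eq_of_C_mul_nodePoly_sub_weightPoly_eq hr.injective hU
  exact ⟨rfl, rfl, rfl⟩
end
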